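/- Let n ≥ 3 and let f: X → Y be an irreducible morphism in C_n(proj Λ). (i) If X^1 = 0 and Y^1 = 0, then *[f]: *[X] → *[Y] is an irreducible morphism in C_{n−1}(proj Λ). (ii) If X^n = 0 and Y^n = 0, then [f]_*: [X]_* → [Y]_* is an irreducible morphism in C_{n−1}(proj Λ). -/

import Mathlib

open CategoryTheory CategoryTheory.Limits ZeroObject

noncomputable section

namespace Paper

/-- The ambient category: cochain complexes of right `Λ`-modules indexed by `ℤ`. -/
abbrev Amb (Λ : Type) [Ring Λ] := CochainComplex (ModuleCat.{0} Λᵐᵒᵖ) ℤ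

variable {Λ : Type} [Ring Λ]

/-- All cells are finitely generated projective right `Λ`-modules. -/
def ProjCells (X : Amb Λ) : Prop :=
  ∀ i : ℤ, Module.Finite Λᵐᵒᵖ (X.X i) ∧ Module.Projective Λᵐᵒᵖ (X.X i)

/-- The complex is supported in the window `[a, b]`. -/
def Supp (a b : ℤ) (X : Amb Λ) : Prop :=
  ∀ i : ℤ, (i < a ∨ b < i) → IsZero (X.X i)

/-- Object of the category `C_{[a,b]}(proj Λ)` of complexes of finitely generated
projective modules concentrated in the window `[a, b]`.  (The category
`C_n(proj Λ)` of the paper corresponds to the window `[1, n]`; a window `[a, b]`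
corresponds to `C_{b-a+1}(proj Λ)` after the canonical reindexing.) -/
def InC (a b : ℤ) (X : Amb Λ) : Prop := Supp a b X ∧ ProjCells X

def IsSect {X Y : Amb Λ} (f : X ⟶ Y) : Prop := ∃ h : Y ⟶ X, f ≫ h = 𝟙 X

def IsRetr {X Y : Amb Λ} (f : X ⟶ Y) : Prop := ∃ h : Y ⟶ X, h ≫ f = 𝟙 Y

/-- `f` is irreducible in `C_{[a,b]}(proj Λ)`. -/
def Irred (a b : ℤ) {X Y : Amb Λ} (f : X ⟶ Y) : Prop :=
  ¬ IsSect f ∧ ¬ IsRetr f ∧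
    ∀ (W : Amb Λ), InC a b W → ∀ (g : X ⟶ W) (h : W ⟶ Y),
      g ≫ h = f → IsRetr h ∨ IsSect g

/-- Indecomposable complex. -/
def Indec (X : Amb Λ) : Prop :=
  ¬ IsZero X ∧ ∀ (A B : Amb Λ), (X ≅ A ⊞ B) → IsZero A ∨ IsZero B

/-- A conflation: in every degree a split short exact sequence. -/
def DegSplit {X Y Z : Amb Λ} (f : X ⟶ Y) (g : Y ⟶ Z) : Prop :=
  ∀ j : ℤ, ∃ w : f.f j ≫ g.f j = 0,
    Nonempty (ShortComplex.mk (f.f j) (g.f j) w).Splitting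

/-- Minimal left almost split morphism in `C_{[a,b]}(proj Λ)`. -/
def MinLeftAS (a b : ℤ) {X Y : Amb Λ} (f : X ⟶ Y) : Prop :=
  ¬ IsSect f ∧
    (∀ (W : Amb Λ), InC a b W → ∀ u : X ⟶ W, ¬ IsSect u → ∃ v : Y ⟶ W, f ≫ v = u) ∧
    (∀ u : Y ⟶ Y, f ≫ u = f → IsIso u)

/-- Minimal right almost split morphism in `C_{[a,b]}(proj Λ)`. -/
def MinRightAS (a b : ℤ) {Y Z : Amb Λ} (g : Y ⟶ Z) : Prop :=
  ¬ IsRetr g ∧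
    (∀ (W : Amb Λ), InC a b W → ∀ u : W ⟶ Z, ¬ IsRetr u → ∃ v : W ⟶ Y, v ≫ g = u) ∧
    (∀ u : Y ⟶ Y, u ≫ g = g → IsIso u)

/-- Almost split sequence in `C_{[a,b]}(proj Λ)`. -/
def AlmostSplit (a b : ℤ) {X Y Z : Amb Λ} (f : X ⟶ Y) (g : Y ⟶ Z) : Prop :=
  DegSplit f g ∧ MinLeftAS a b f ∧ MinRightAS a b g

/-- `X` (supported in a window starting at `a`) can be extended to the left. -/
def ExtLeft (a : ℤ) (X : Amb Λ) : Prop :=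
  ∃ P : ModuleCat.{0} Λᵐᵒᵖ, Module.Finite Λᵐᵒᵖ P ∧ Module.Projective Λᵐᵒᵖ P ∧
    ∃ δ : P ⟶ X.X a, δ ≠ 0 ∧ δ ≫ X.d a (a + 1) = 0

/-- `X` (supported in a window ending at `b`) can be extended to the right. -/
def ExtRight (b : ℤ) (X : Amb Λ) : Prop :=
  ∃ P : ModuleCat.{0} Λᵐᵒᵖ, Module.Finite Λᵐᵒᵖ P ∧ Module.Projective Λᵐᵒᵖ P ∧
    ∃ δ : X.X b ⟶ P, δ ≠ 0 ∧ X.d (b - 1) b ≫ δ = 0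

/-- Bounded complex. -/
def BddCplx (X : Amb Λ) : Prop := ∃ a b : ℤ, Supp a b X

/-- Contractible complex, i.e. zero in the homotopy category. -/
def Contractible (X : Amb Λ) : Prop := Nonempty (Homotopy (𝟙 X) 0)

/-- Indecomposable nonzero object of `K^b(proj Λ)`. -/
def HIndec (X : Amb Λ) : Prop :=
  ¬ Contractible X ∧
    ∀ (A B : Amb Λ), ProjCells A → BddCplx A → ProjCells B → BddCplx B →
      Nonempty (HomotopyEquiv X (A ⊞ B)) → Contractible A ∨ Contractible B

/-- The candidate lengths of `X` as an object of `K^b(proj Λ)`. -/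
def lenSet (X : Amb Λ) : Set ℕ :=
  {d | ∃ (Y : Amb Λ) (r s : ℤ), r ≤ s ∧ Nonempty (HomotopyEquiv X Y) ∧
        ProjCells Y ∧ Supp r s Y ∧ d = (s - r).toNat}

/-- `ℓ(X)`. -/
def len (X : Amb Λ) : ℕ := sInf (lenSet X)

/-- `η` is the strong global dimension of `Λ`. -/
def IsSGdim (Λ : Type) [Ring Λ] (η : ℕ) : Prop :=
  IsGreatest {d : ℕ | ∃ X : Amb Λ, ProjCells X ∧ BddCplx X ∧ HIndec X ∧ len X = d} η

/-- Brutal truncation of a complex to the set of degrees satisfying `P`. -/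
def chop (P : ℤ → Prop) [DecidablePred P] (X : Amb Λ) : Amb Λ where
  X i := if P i then X.X i else 0
  d i j :=
    if hi : P i then
      if hj : P j then
        eqToHom (if_pos hi) ≫ X.d i j ≫ eqToHom (if_pos hj).symm
      else 0
    else 0
  shape i j h := by
    by_cases hi : P i
    · by_cases hj : P j
      · simp [hi, hj, X.shape i j h]
      · simp [hi, hj]
    · simp [hi]
  d_comp_d' i j k hij hjk := by
    by_cases hi : P i <;> by_cases hj : P j <;> by_cases hk : P k <;>
      simp [hi, hj, hk]

/-- Brutal truncation of a chain map. -/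
def chopMap (P : ℤ → Prop) [DecidablePred P] {X Y : Amb Λ} (f : X ⟶ Y) :
    chop P X ⟶ chop P Y where
  f i :=
    if h : P i then eqToHom (if_pos h) ≫ f.f i ≫ eqToHom (if_pos h).symm
    else 0
  comm' i j hij := by
    by_cases hi : P i <;> by_cases hj : P j <;>
      simp [chop, hi, hj] <;> first | exact zero_comp.symm | exact zero_comp

/-- `E_{[a,b]}`-projective complex (lifting against proper epimorphisms). -/
def EProj (a b : ℤ) (P : Amb Λ) : Prop :=
  ∀ (W₁ W₂ : Amb Λ), InC a b W₁ → InC a b W₂ → ∀ v : W₁ ⟶ W₂,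
    (∀ j : ℤ, Epi (v.f j)) → ∀ f : P ⟶ W₂, ∃ g : P ⟶ W₁, g ≫ v = f

/-- `E_{[a,b]}`-injective complex (extending along proper monomorphisms). -/
def EInj (a b : ℤ) (I : Amb Λ) : Prop :=
  ∀ (W₁ W₂ : Amb Λ), InC a b W₁ → InC a b W₂ → ∀ v : W₁ ⟶ W₂,
    (∀ j : ℤ, Mono (v.f j)) → ∀ f : W₁ ⟶ I, ∃ g : W₂ ⟶ I, v ≫ g = f

/-!
If the first (resp. last) cell of `X` and `Y` vanishes, then deleting it does not change `X`,
`Y` or `f` up to isomorphism, so the truncated `f` is a conjugate of `f` by isomorphisms.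
Irreducibility is invariant under such conjugation, and it survives passing from
`C_n(proj Λ)` to the full subcategory `C_{n-1}(proj Λ)`, as fewer factorizations need to be tested.
-/

section Irreducible

variable {a b : ℤ} {X Y X' Y' : Amb Λ}

lemma IsSect.conj {f : X ⟶ Y} (hf : IsSect f) (eX : X ≅ X') (eY : Y ≅ Y') :
    IsSect (eX.inv ≫ f ≫ eY.hom) := by
  obtain ⟨h, hh⟩ := hf
  exact ⟨eY.inv ≫ h ≫ eX.hom, by simp [reassoc_of% hh]⟩

lemma IsRetr.conj {f : X ⟶ Y} (hf : IsRetr f) (eX : X ≅ X') (eY : Y ≅ Y') :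
    IsRetr (eX.inv ≫ f ≫ eY.hom) := by
  obtain ⟨h, hh⟩ := hf
  exact ⟨eY.inv ≫ h ≫ eX.hom, by simp [reassoc_of% hh]⟩

lemma Irred.conj {f : X ⟶ Y} (hf : Irred a b f) (eX : X ≅ X') (eY : Y ≅ Y') :
    Irred a b (eX.inv ≫ f ≫ eY.hom) := by
  obtain ⟨hs, hr, hfac⟩ := hf
  refine ⟨fun h => hs (by simpa using h.conj eX.symm eY.symm),
    fun h => hr (by simpa using h.conj eX.symm eY.symm), fun W hW g h hgh => ?_⟩
  have hgh' : (eX.hom ≫ g) ≫ (h ≫ eY.inv) = f := by simp [reassoc_of% hgh]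
  exact (hfac W hW _ _ hgh').imp (fun hr' => by simpa using hr'.conj (Iso.refl W) eY)
    (fun hs' => by simpa using hs'.conj eX (Iso.refl W))

lemma InC.of_le {a' b' : ℤ} {W : Amb Λ} (hW : InC a' b' W) (ha : a ≤ a') (hb : b' ≤ b) :
    InC a b W :=
  ⟨fun i hi => hW.1 i (by omega), hW.2⟩

lemma Irred.of_le {a' b' : ℤ} {f : X ⟶ Y} (hf : Irred a b f) (ha : a ≤ a') (hb : b' ≤ b) :
    Irred a' b' f :=
  ⟨hf.1, hf.2.1, fun W hW => hf.2.2 W (hW.of_le ha hb)⟩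

end Irreducible

section Truncation

variable (P : ℤ → Prop) [DecidablePred P]

lemma isZero_chop_X (X : Amb Λ) {i : ℤ} (hi : ¬ P i) : IsZero ((chop P X).X i) := by
  simp only [chop, if_neg hi]
  exact isZero_zero _

def chopIso (X : Amb Λ) (hX : ∀ i, ¬ P i → IsZero (X.X i)) : X ≅ chop P X :=
  HomologicalComplex.Hom.isoOfComponents
    (fun i => if h : P i then eqToIso (if_pos h).symm else (hX i h).iso (isZero_chop_X P X h))
    (fun i j _ => by
      by_cases hi : P i
      · by_cases hj : P j
        · simp [chop, hi, hj]
        · exact (isZero_chop_X P X hj).eq_of_tgt _ _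
      · exact (hX i hi).eq_of_src _ _)

lemma chopMap_eq_conj {X Y : Amb Λ} (f : X ⟶ Y) (hX : ∀ i, ¬ P i → IsZero (X.X i))
    (hY : ∀ i, ¬ P i → IsZero (Y.X i)) :
    chopMap P f = (chopIso P X hX).inv ≫ f ≫ (chopIso P Y hY).hom := by
  ext i : 1
  by_cases hi : P i
  · simp only [chopMap, chopIso, hi, ↓reduceDIte, HomologicalComplex.comp_f,
      HomologicalComplex.Hom.isoOfComponents_inv_f, HomologicalComplex.Hom.isoOfComponents_hom_f]
    rfl
  · exact (isZero_chop_X P X hi).eq_of_src _ _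

lemma Irred.chopMap {a b : ℤ} {X Y : Amb Λ} {f : X ⟶ Y} (hf : Irred a b f)
    (hX : ∀ i, ¬ P i → IsZero (X.X i)) (hY : ∀ i, ¬ P i → IsZero (Y.X i)) :
    Irred a b (chopMap P f) := by
  rw [chopMap_eq_conj P f hX hY]
  exact hf.conj _ _

end Truncation

lemma Supp.succ_left {a b : ℤ} {X : Amb Λ} (hX : Supp a b X) (ha : IsZero (X.X a)) :
    Supp (a + 1) b X := fun i hi =>
  if h : i = a then h ▸ ha else hX i (by omega)

lemma Supp.pred_right {a b : ℤ} {X : Amb Λ} (hX : Supp a b X) (hb : IsZero (X.X b)) :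
    Supp a (b - 1) X := fun i hi =>
  if h : i = b then h ▸ hb else hX i (by omega)

theorem statement0_general (Λ : Type) [Ring Λ]
    (n : ℤ) (X Y : Amb Λ) (hX : InC 1 n X) (hY : InC 1 n Y)
    (f : X ⟶ Y) (hf : Irred 1 n f) :
    (IsZero (X.X 1) → IsZero (Y.X 1) →
      Irred 2 n (chopMap (fun i => 2 ≤ i) f)) ∧
    (IsZero (X.X n) → IsZero (Y.X n) →
      Irred 1 (n - 1) (chopMap (fun i => i ≤ n - 1) f)) := by
  refine ⟨fun hX1 hY1 => ?_, fun hXn hYn => ?_⟩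
  · have hX' : Supp 2 n X := hX.1.succ_left hX1
    have hY' : Supp 2 n Y := hY.1.succ_left hY1
    exact (hf.of_le (by norm_num) le_rfl).chopMap _
      (fun i hi => hX' i (.inl (not_le.mp hi))) (fun i hi => hY' i (.inl (not_le.mp hi)))
  · have hX' : Supp 1 (n - 1) X := hX.1.pred_right hXn
    have hY' : Supp 1 (n - 1) Y := hY.1.pred_right hYn
    exact (hf.of_le le_rfl (by omega)).chopMap _
      (fun i hi => hX' i (.inr (not_le.mp hi))) (fun i hi => hY' i (.inr (not_le.mp hi)))

theorem statement0 (K : Type) [Field K] [IsAlgClosed K]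
    (Λ : Type) [Ring Λ] [Algebra K Λ] [FiniteDimensional K Λ]
    (n : ℤ) (hn : 3 ≤ n) (X Y : Amb Λ) (hX : InC 1 n X) (hY : InC 1 n Y)
    (f : X ⟶ Y) (hf : Irred 1 n f) :
    (IsZero (X.X 1) → IsZero (Y.X 1) →
      Irred 2 n (chopMap (fun i => 2 ≤ i) f)) ∧
    (IsZero (X.X n) → IsZero (Y.X n) →
      Irred 1 (n - 1) (chopMap (fun i => i ≤ n - 1) f)) :=
  statement0_general Λ n X Y hX hY f hf

end Paper
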